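/- For every integer k ≥ 1, every complex d×d density matrix ρ and every positive definite complex d×d matrix σ such that ρσ = σρ, the iterated mean divergence reduces to the classical Rényi divergence: Q^{im}_{α_k}(ρ‖σ) = tr(ρ^{α_k} σ^{1−α_k}), and hence D^{im}_{α_k}(ρ‖σ) = (1/(α_k−1))·log tr(ρ^{α_k} σ^{1−α_k}). -/

import Mathlib

open Matrix ComplexOrder

/-- `α_k = 1 + 1/(2^k - 1)`. -/
noncomputable def alphaIM (k : ℕ) : ℝ := 1 + 1 / (2 ^ k - 1)

/-- Feasibility of `(V₁, …, V_k, Z)` for the primal SDP defining the iterated mean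
divergence: `Z ≥ 0`, `V₁ + V₁* ≥ 0`, `Vᵢ* Vᵢ ≤ (Vᵢ₊₁ + Vᵢ₊₁*)/2` for `1 ≤ i ≤ k-1`, and
`V_k* V_k ≤ Z`.  The matrices are indexed by `ℕ`, with only indices `1, …, k` relevant. -/
def QimFeasible {n : Type*} [Fintype n] (k : ℕ)
    (V : ℕ → Matrix n n ℂ) (Z : Matrix n n ℂ) : Prop :=
  Z.PosSemidef ∧
  (V 1 + (V 1)ᴴ).PosSemidef ∧
  (∀ i : ℕ, 1 ≤ i → i < k →
    ((2 : ℂ)⁻¹ • (V (i + 1) + (V (i + 1))ᴴ) - (V i)ᴴ * V i).PosSemidef) ∧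
  (Z - (V k)ᴴ * V k).PosSemidef

/-- The objective `α_k · Re tr(ρ (V₁+V₁*)/2) − (α_k − 1) · Re tr(σ Z)`. -/
noncomputable def QimObj {n : Type*} [Fintype n] (k : ℕ)
    (ρ σ : Matrix n n ℂ) (V : ℕ → Matrix n n ℂ) (Z : Matrix n n ℂ) : ℝ :=
  alphaIM k * ((ρ * (V 1 + (V 1)ᴴ)).trace.re / 2) - (alphaIM k - 1) * (σ * Z).trace.re

/-- The iterated mean quantity `Q^{im}_{α_k}(ρ‖σ)`. -/
noncomputable def Qim {n : Type*} [Fintype n] (k : ℕ) (ρ σ : Matrix n n ℂ) : ℝ :=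
  sSup {q : ℝ | ∃ V Z, QimFeasible k V Z ∧ q = QimObj k ρ σ V Z}

/-- The iterated mean divergence `D^{im}_{α_k}(ρ‖σ) = (1/(α_k−1)) log Q^{im}_{α_k}(ρ‖σ)`. -/
noncomputable def Dim {n : Type*} [Fintype n] (k : ℕ) (ρ σ : Matrix n n ℂ) : ℝ :=
  (1 / (alphaIM k - 1)) * Real.log (Qim k ρ σ)

/-- Real powers of a Hermitian matrix, via the spectral decomposition (continuous
functional calculus); junk value `0` on non-Hermitian matrices. -/
noncomputable def mrpow {n : Type*} [Fintype n] [DecidableEq n]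
    (A : Matrix n n ℂ) (r : ℝ) : Matrix n n ℂ :=
  if h : A.IsHermitian then
    (h.eigenvectorUnitary : Matrix n n ℂ) *
      Matrix.diagonal (fun i => ((h.eigenvalues i ^ r : ℝ) : ℂ)) *
      (h.eigenvectorUnitary : Matrix n n ℂ)ᴴ
  else 0

/-- Matrix geometric mean `A # B = A^{1/2} (A^{-1/2} B A^{-1/2})^{1/2} A^{1/2}`. -/
noncomputable def geomMean {n : Type*} [Fintype n] [DecidableEq n]
    (A B : Matrix n n ℂ) : Matrix n n ℂ :=
  mrpow A (1/2) * mrpow (mrpow A (-(1/2)) * B * mrpow A (-(1/2))) (1/2) * mrpow A (1/2)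

/-- Partial trace over the first tensor factor. -/
noncomputable def ptrFst {α β : Type*} [Fintype α] (M : Matrix (α × β) (α × β) ℂ) :
    Matrix β β ℂ :=
  Matrix.of fun b b' => ∑ a, M (a, b) (a, b')

/-- Iterated geometric mean: `iterGeom σ A k = A₁ # (A₂ # (⋯ # (A_k # σ)⋯))`. -/
noncomputable def iterGeom {n : Type*} [Fintype n] [DecidableEq n]
    (σ : Matrix n n ℂ) : (ℕ → Matrix n n ℂ) → ℕ → Matrix n n ℂ
  | _, 0 => σ
  | A, (j + 1) => geomMean (A 1) (iterGeom σ (fun i => A (i + 1)) j)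

/-!
For commuting `ρ` and `σ` every matrix below is a product `ρ^a σ^b`, and these multiply by adding
exponents. Write `A_m = (ρ σ⁻¹)^(2^m (α-1))` (`ratioPow`) and
`W_m = ρ^(α - 2^m (α-1)) σ^((2^m - 1)(α-1))` (`chainWeight`), so that `W_0 = ρ`, `W_k = σ`
(because `2^k (α_k - 1) = α_k`), `W_{m+1} A_m = W_m` and `W_m A_m = ρ^α σ^(1-α)`.

Lower bound: `V_i = A_{i-1}`, `Z = A_k` makes every constraint tight (`A_m² = A_{m+1}`) and the
objective equal to `tr(ρ^α σ^(1-α))`.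

Upper bound: put `V_{k+1} = Z` and `x_m = Re tr(W_m V_{m+1}) - tr(ρ^α σ^(1-α))`. Weighted AM-GM,
`2 Re tr(W_{m+1} A_m V) ≤ tr(W_{m+1} A_m²) + tr(W_{m+1} Vᴴ V)`, followed by the `(m+1)`-st
constraint tested against `W_{m+1} ≥ 0`, gives `2 x_m ≤ x_{m+1}`. Hence `2^k x_0 ≤ x_k`, which
after multiplying by `α - 1` is the bound `α Re tr(ρ V_1) - (α - 1) tr(σ Z) ≤ tr(ρ^α σ^(1-α))`.
-/

open scoped MatrixOrder

section MatrixPower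

variable {n : Type*} [Fintype n] [DecidableEq n] {A B : Matrix n n ℂ}

lemma mrpow_eq_cfc (hA : A.IsHermitian) (r : ℝ) : mrpow A r = cfc (fun x : ℝ => x ^ r) A := by
  rw [mrpow, dif_pos hA, hA.cfc_eq, IsHermitian.cfc, Unitary.conjStarAlgAut_apply]
  rfl

lemma posSemidef_mrpow (hA : A.PosSemidef) (r : ℝ) : (mrpow A r).PosSemidef := by
  rw [mrpow_eq_cfc hA.1, ← nonneg_iff_posSemidef]
  exact cfc_nonneg fun x hx => Real.rpow_nonneg (spectrum_nonneg_of_nonneg hA.nonneg hx) r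

lemma mrpow_mul_mrpow_of_posSemidef (hA : A.PosSemidef) {a b : ℝ} (ha : 0 ≤ a) (hb : 0 ≤ b) :
    mrpow A a * mrpow A b = mrpow A (a + b) := by
  rw [mrpow_eq_cfc hA.1, mrpow_eq_cfc hA.1, mrpow_eq_cfc hA.1,
    ← cfc_mul _ _ _ (A.finite_real_spectrum.continuousOn _) (A.finite_real_spectrum.continuousOn _)]
  exact cfc_congr fun x hx =>
    (Real.rpow_add_of_nonneg (spectrum_nonneg_of_nonneg hA.nonneg hx) ha hb).symm

lemma mrpow_mul_mrpow_of_posDef (hA : A.PosDef) (a b : ℝ) :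
    mrpow A a * mrpow A b = mrpow A (a + b) := by
  rw [mrpow_eq_cfc hA.1, mrpow_eq_cfc hA.1, mrpow_eq_cfc hA.1,
    ← cfc_mul _ _ _ (A.finite_real_spectrum.continuousOn _) (A.finite_real_spectrum.continuousOn _)]
  exact cfc_congr fun x hx => (Real.rpow_add (hA.isStrictlyPositive.spectrum_pos hx) a b).symm

lemma mrpow_zero (hA : A.IsHermitian) : mrpow A 0 = 1 := by
  simp only [mrpow_eq_cfc hA, Real.rpow_zero]
  exact cfc_const_one ℝ A

lemma mrpow_one (hA : A.IsHermitian) : mrpow A 1 = A := by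
  simp only [mrpow_eq_cfc hA, Real.rpow_one]
  exact cfc_id' ℝ A

lemma Commute.mrpow_right (h : Commute A B) (hB : B.IsHermitian) (r : ℝ) :
    Commute A (mrpow B r) := by
  rw [mrpow_eq_cfc hB]
  exact (h.symm.cfc_real _).symm

lemma Commute.mrpow_mrpow (h : Commute A B) (hA : A.IsHermitian) (hB : B.IsHermitian) (a b : ℝ) :
    Commute (mrpow A a) (mrpow B b) :=
  ((h.mrpow_right hB b).symm.mrpow_right hA a).symm

end MatrixPower

section Trace

variable {n : Type*} [Fintype n] {W X Y A : Matrix n n ℂ}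

lemma re_trace_mul_nonneg (hW : W.PosSemidef) (hX : X.PosSemidef) : 0 ≤ (W * X).trace.re := by
  classical
  obtain ⟨B, rfl⟩ := CStarAlgebra.nonneg_iff_eq_star_mul_self.mp hW.nonneg
  rw [star_eq_conjTranspose, Matrix.mul_assoc, trace_mul_comm]
  exact (Complex.nonneg_iff.mp (hX.mul_mul_conjTranspose_same B).trace_nonneg).1

lemma re_trace_mul_le_of_posSemidef_sub (hW : W.PosSemidef) (h : (X - Y).PosSemidef) :
    (W * Y).trace.re ≤ (W * X).trace.re := by
  have := re_trace_mul_nonneg hW h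
  rw [Matrix.mul_sub, trace_sub, Complex.sub_re] at this
  linarith

lemma re_trace_mul_conjTranspose (hW : W.IsHermitian) (V : Matrix n n ℂ) :
    (W * Vᴴ).trace.re = (W * V).trace.re := by
  rw [trace_mul_comm, ← hW.eq, ← conjTranspose_mul, trace_conjTranspose, hW.eq,
    Complex.star_def, Complex.conj_re]

lemma re_trace_mul_half_add_conjTranspose (hW : W.IsHermitian) (V : Matrix n n ℂ) :
    (W * ((2 : ℂ)⁻¹ • (V + Vᴴ))).trace.re = (W * V).trace.re := by
  rw [Matrix.mul_smul, Matrix.mul_add, trace_smul, trace_add, smul_eq_mul, Complex.mul_re]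
  simp only [Complex.add_re, re_trace_mul_conjTranspose hW]
  norm_num
  ring

/-- The trace form of `0 ≤ (V - A)ᴴ (V - A)` weighted by `W`; commutation of `A` and `W` is what
lets the two cross terms be combined. -/
lemma two_mul_re_trace_mul_le (hW : W.PosSemidef) (hA : A.IsHermitian) (hAW : Commute A W)
    (V : Matrix n n ℂ) :
    2 * (W * A * V).trace.re ≤ (W * A * A).trace.re + (W * (Vᴴ * V)).trace.re := by
  have hWA : (W * A).IsHermitian := by
    rw [IsHermitian, conjTranspose_mul, hA.eq, hW.1.eq, hAW.eq]
  have hcross : (W * (Vᴴ * A)).trace.re = (W * A * V).trace.re := by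
    rw [← Matrix.mul_assoc, trace_mul_comm, ← Matrix.mul_assoc, hAW.eq,
      re_trace_mul_conjTranspose hWA]
  have hexpand : W * ((V - A)ᴴ * (V - A)) =
      W * (Vᴴ * V) - W * (Vᴴ * A) - W * A * V + W * A * A := by
    rw [conjTranspose_sub, hA.eq]
    noncomm_ring
  have h := re_trace_mul_nonneg hW (posSemidef_conjTranspose_mul_self (V - A))
  rw [hexpand] at h
  simp only [trace_add, trace_sub, Complex.add_re, Complex.sub_re, hcross] at h
  linarith

end Trace

lemma two_pow_mul_le_of_two_mul_le {x : ℕ → ℝ} {k : ℕ} (h : ∀ m < k, 2 * x m ≤ x (m + 1)) :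
    2 ^ k * x 0 ≤ x k := by
  induction k with
  | zero => simp
  | succ k ih =>
    calc 2 ^ (k + 1) * x 0 = 2 * (2 ^ k * x 0) := by ring
      _ ≤ 2 * x k := by gcongr; exact ih fun m hm => h m (by omega)
      _ ≤ x (k + 1) := h k (by omega)

section MixedPower

variable {n : Type*} [Fintype n] [DecidableEq n] {ρ σ : Matrix n n ℂ}

noncomputable def mixedPow (ρ σ : Matrix n n ℂ) (a b : ℝ) : Matrix n n ℂ := mrpow ρ a * mrpow σ b

lemma commute_mixedPow (hρ : ρ.IsHermitian) (hσ : σ.IsHermitian) (hρσ : Commute ρ σ)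
    (a b a' b' : ℝ) : Commute (mixedPow ρ σ a b) (mixedPow ρ σ a' b') := by
  have hρρ := (Commute.refl ρ).mrpow_mrpow hρ hρ
  have hσσ := (Commute.refl σ).mrpow_mrpow hσ hσ
  have hρσ' := hρσ.mrpow_mrpow hρ hσ
  exact ((hρρ a a').mul_right (hρσ' a b')).mul_left
    (((hρσ' a' b).symm).mul_right (hσσ b b'))

lemma mixedPow_mul_mixedPow (hρ : ρ.PosSemidef) (hσ : σ.PosDef) (hρσ : Commute ρ σ)
    {a a' : ℝ} (b b' : ℝ) (ha : 0 ≤ a) (ha' : 0 ≤ a') :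
    mixedPow ρ σ a b * mixedPow ρ σ a' b' = mixedPow ρ σ (a + a') (b + b') := by
  simp only [mixedPow]
  rw [Matrix.mul_assoc, ← Matrix.mul_assoc (mrpow σ b),
    ← (hρσ.mrpow_mrpow hρ.1 hσ.1 a' b).eq, Matrix.mul_assoc, ← Matrix.mul_assoc,
    mrpow_mul_mrpow_of_posSemidef hρ ha ha', mrpow_mul_mrpow_of_posDef hσ]

lemma posSemidef_mixedPow (hρ : ρ.PosSemidef) (hσ : σ.PosSemidef) (hρσ : Commute ρ σ)
    (a b : ℝ) : (mixedPow ρ σ a b).PosSemidef := by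
  rw [← nonneg_iff_posSemidef]
  exact Commute.mul_nonneg (posSemidef_mrpow hρ a).nonneg (posSemidef_mrpow hσ b).nonneg
    (hρσ.mrpow_mrpow hρ.1 hσ.1 a b)

lemma mixedPow_one_zero (hρ : ρ.IsHermitian) (hσ : σ.IsHermitian) : mixedPow ρ σ 1 0 = ρ := by
  rw [mixedPow, mrpow_one hρ, mrpow_zero hσ, Matrix.mul_one]

lemma mixedPow_zero_one (hρ : ρ.IsHermitian) (hσ : σ.IsHermitian) : mixedPow ρ σ 0 1 = σ := by
  rw [mixedPow, mrpow_zero hρ, mrpow_one hσ, Matrix.one_mul]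

end MixedPower

section IteratedMeanChain

variable {n : Type*} [Fintype n] [DecidableEq n] {ρ σ : Matrix n n ℂ} {α : ℝ} {k m : ℕ}

noncomputable def ratioPow (ρ σ : Matrix n n ℂ) (α : ℝ) (m : ℕ) : Matrix n n ℂ :=
  mixedPow ρ σ (2 ^ m * (α - 1)) (-(2 ^ m * (α - 1)))

noncomputable def chainWeight (ρ σ : Matrix n n ℂ) (α : ℝ) (m : ℕ) : Matrix n n ℂ :=
  mixedPow ρ σ (α - 2 ^ m * (α - 1)) ((2 ^ m - 1) * (α - 1))

lemma posSemidef_ratioPow (hρ : ρ.PosSemidef) (hσ : σ.PosSemidef) (hρσ : Commute ρ σ) (α : ℝ)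
    (m : ℕ) : (ratioPow ρ σ α m).PosSemidef :=
  posSemidef_mixedPow hρ hσ hρσ _ _

lemma posSemidef_chainWeight (hρ : ρ.PosSemidef) (hσ : σ.PosSemidef) (hρσ : Commute ρ σ)
    (α : ℝ) (m : ℕ) : (chainWeight ρ σ α m).PosSemidef :=
  posSemidef_mixedPow hρ hσ hρσ _ _

lemma ratioPow_mul_self (hρ : ρ.PosSemidef) (hσ : σ.PosDef) (hρσ : Commute ρ σ) (hα : 1 ≤ α)
    (m : ℕ) : ratioPow ρ σ α m * ratioPow ρ σ α m = ratioPow ρ σ α (m + 1) := by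
  have h : (0 : ℝ) ≤ 2 ^ m * (α - 1) := by nlinarith [pow_pos (two_pos (α := ℝ)) m]
  rw [ratioPow, mixedPow_mul_mixedPow hρ hσ hρσ _ _ h h, ratioPow]
  congr 1 <;> ring

lemma chainWeight_zero (hρ : ρ.IsHermitian) (hσ : σ.IsHermitian) : chainWeight ρ σ α 0 = ρ := by
  rw [chainWeight]
  convert mixedPow_one_zero hρ hσ using 2 <;> ring

lemma chainWeight_top (hρ : ρ.IsHermitian) (hσ : σ.IsHermitian) (hαk : 2 ^ k * (α - 1) = α) :
    chainWeight ρ σ α k = σ := by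
  rw [chainWeight]
  convert mixedPow_zero_one hρ hσ using 2
  · linarith
  · linear_combination hαk

lemma sub_two_pow_mul_sub_one_nonneg (hα : 1 ≤ α) (hαk : 2 ^ k * (α - 1) = α) (hm : m ≤ k) :
    0 ≤ α - 2 ^ m * (α - 1) := by
  have : (2 : ℝ) ^ m ≤ 2 ^ k := pow_le_pow_right₀ one_le_two hm
  nlinarith

lemma chainWeight_succ_mul_ratioPow (hρ : ρ.PosSemidef) (hσ : σ.PosDef) (hρσ : Commute ρ σ)
    (hα : 1 ≤ α) (hαk : 2 ^ k * (α - 1) = α) (hm : m < k) :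
    chainWeight ρ σ α (m + 1) * ratioPow ρ σ α m = chainWeight ρ σ α m := by
  have h : (0 : ℝ) ≤ 2 ^ m * (α - 1) := by nlinarith [pow_pos (two_pos (α := ℝ)) m]
  rw [chainWeight, ratioPow,
    mixedPow_mul_mixedPow hρ hσ hρσ _ _ (sub_two_pow_mul_sub_one_nonneg hα hαk hm) h, chainWeight]
  congr 1 <;> rw [pow_succ] <;> ring

lemma chainWeight_mul_ratioPow (hρ : ρ.PosSemidef) (hσ : σ.PosDef) (hρσ : Commute ρ σ)
    (hα : 1 ≤ α) (hαk : 2 ^ k * (α - 1) = α) (hm : m ≤ k) :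
    chainWeight ρ σ α m * ratioPow ρ σ α m = mixedPow ρ σ α (1 - α) := by
  have h : (0 : ℝ) ≤ 2 ^ m * (α - 1) := by nlinarith [pow_pos (two_pos (α := ℝ)) m]
  rw [chainWeight, ratioPow,
    mixedPow_mul_mixedPow hρ hσ hρσ _ _ (sub_two_pow_mul_sub_one_nonneg hα hαk hm) h]
  congr 1 <;> ring

lemma two_mul_re_trace_chainWeight_le (hρ : ρ.PosSemidef) (hσ : σ.PosDef) (hρσ : Commute ρ σ)
    (hα : 1 ≤ α) (hαk : 2 ^ k * (α - 1) = α) (hm : m < k) {V X : Matrix n n ℂ}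
    (hVX : (X - Vᴴ * V).PosSemidef) :
    2 * (chainWeight ρ σ α m * V).trace.re ≤
      (mixedPow ρ σ α (1 - α)).trace.re + (chainWeight ρ σ α (m + 1) * X).trace.re := by
  have hW := posSemidef_chainWeight hρ hσ.posSemidef hρσ α (m + 1)
  have hA := (posSemidef_ratioPow hρ hσ.posSemidef hρσ α m).1
  have hAW : Commute (ratioPow ρ σ α m) (chainWeight ρ σ α (m + 1)) :=
    commute_mixedPow hρ.1 hσ.1 hρσ _ _ _ _
  have key := two_mul_re_trace_mul_le hW hA hAW V
  rw [chainWeight_succ_mul_ratioPow hρ hσ hρσ hα hαk hm,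
    chainWeight_mul_ratioPow hρ hσ hρσ hα hαk hm.le] at key
  linarith [re_trace_mul_le_of_posSemidef_sub hW hVX]

end IteratedMeanChain

section IteratedMeanDivergence

variable {n : Type*} [Fintype n] {ρ σ : Matrix n n ℂ} {k : ℕ}

lemma one_le_alphaIM (k : ℕ) : 1 ≤ alphaIM k := by
  have : (1 : ℝ) ≤ 2 ^ k := one_le_pow₀ one_le_two
  exact le_add_of_nonneg_right (one_div_nonneg.mpr (by linarith))

lemma two_pow_mul_alphaIM_sub_one (hk : 1 ≤ k) : 2 ^ k * (alphaIM k - 1) = alphaIM k := by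
  have : (2 : ℝ) ≤ 2 ^ k := by simpa using pow_le_pow_right₀ one_le_two hk
  rw [alphaIM, add_sub_cancel_left]
  field_simp [show (2 : ℝ) ^ k - 1 ≠ 0 by linarith]
  ring

lemma qimObj_eq (hρ : ρ.IsHermitian) (V : ℕ → Matrix n n ℂ) (Z : Matrix n n ℂ) :
    QimObj k ρ σ V Z = alphaIM k * (ρ * V 1).trace.re - (alphaIM k - 1) * (σ * Z).trace.re := by
  rw [QimObj, Matrix.mul_add, trace_add, Complex.add_re, re_trace_mul_conjTranspose hρ]
  ring

/-- Appending `Z` as `V (k + 1)` makes the last constraint `V_kᴴ V_k ≤ Z` one more instance of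
the middle ones, because `Z` is Hermitian. -/
lemma QimFeasible.posSemidef_update {V : ℕ → Matrix n n ℂ} {Z : Matrix n n ℂ}
    (h : QimFeasible k V Z) {i : ℕ} (hi : 1 ≤ i) (hik : i ≤ k) :
    ((2 : ℂ)⁻¹ • (Function.update V (k + 1) Z (i + 1) + (Function.update V (k + 1) Z (i + 1))ᴴ) -
      (Function.update V (k + 1) Z i)ᴴ * Function.update V (k + 1) Z i).PosSemidef := by
  obtain ⟨hZ, -, hmid, hlast⟩ := h
  rw [Function.update_of_ne (by omega : i ≠ k + 1)]
  rcases hik.lt_or_eq with hik | rfl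
  · rw [Function.update_of_ne (by omega)]
    exact hmid i hi hik
  · rw [Function.update_self, hZ.1.eq, ← two_smul ℂ Z, smul_smul, inv_mul_cancel₀ two_ne_zero,
      one_smul]
    exact hlast

variable [DecidableEq n]

lemma QimFeasible.mul_re_trace_sub_mul_re_trace_le {V : ℕ → Matrix n n ℂ} {Z : Matrix n n ℂ}
    (h : QimFeasible k V Z) (hρ : ρ.PosSemidef) (hσ : σ.PosDef) (hρσ : Commute ρ σ) {α : ℝ}
    (hα : 1 ≤ α) (hαk : 2 ^ k * (α - 1) = α) :
    α * (ρ * V 1).trace.re - (α - 1) * (σ * Z).trace.re ≤ (mixedPow ρ σ α (1 - α)).trace.re := by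
  have hk : k ≠ 0 := by
    rintro rfl
    norm_num at hαk
  have hchain : 2 ^ k * ((chainWeight ρ σ α 0 * Function.update V (k + 1) Z 1).trace.re -
        (mixedPow ρ σ α (1 - α)).trace.re) ≤
      (chainWeight ρ σ α k * Function.update V (k + 1) Z (k + 1)).trace.re -
        (mixedPow ρ σ α (1 - α)).trace.re := by
    refine two_pow_mul_le_of_two_mul_le (x := fun m =>
      (chainWeight ρ σ α m * Function.update V (k + 1) Z (m + 1)).trace.re -
        (mixedPow ρ σ α (1 - α)).trace.re) fun m hm => ?_
    have hstep := two_mul_re_trace_chainWeight_le hρ hσ hρσ hα hαk hm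
      (h.posSemidef_update (by omega) (by omega : m + 1 ≤ k))
    rw [re_trace_mul_half_add_conjTranspose (posSemidef_chainWeight hρ hσ.posSemidef hρσ _ _).1]
      at hstep
    linarith
  rw [chainWeight_zero hρ.1 hσ.1, chainWeight_top hρ.1 hσ.1 hαk, Function.update_self,
    Function.update_of_ne (by omega)] at hchain
  have hscaled := mul_le_mul_of_nonneg_left hchain (sub_nonneg.mpr hα)
  rw [← mul_assoc, mul_comm (α - 1), hαk] at hscaled
  linear_combination hscaled

lemma qimFeasible_ratioPow (hρ : ρ.PosSemidef) (hσ : σ.PosDef) (hρσ : Commute ρ σ) {α : ℝ}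
    (hα : 1 ≤ α) (hk : 1 ≤ k) :
    QimFeasible k (fun i => ratioPow ρ σ α (i - 1)) (ratioPow ρ σ α k) := by
  have hpsd := posSemidef_ratioPow hρ hσ.posSemidef hρσ α
  have hsq (m : ℕ) : (ratioPow ρ σ α m)ᴴ * ratioPow ρ σ α m = ratioPow ρ σ α (m + 1) := by
    rw [(hpsd m).1.eq, ratioPow_mul_self hρ hσ hρσ hα]
  refine ⟨hpsd k, (hpsd 0).add (hpsd 0).conjTranspose, fun i hi _ => ?_, ?_⟩
  · obtain ⟨j, rfl⟩ : ∃ j, i = j + 1 := ⟨i - 1, by omega⟩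
    simp only [Nat.add_sub_cancel]
    rw [hsq, (hpsd _).1.eq, ← two_smul ℂ, smul_smul, inv_mul_cancel₀ two_ne_zero, one_smul,
      sub_self]
    exact .zero
  · obtain ⟨j, rfl⟩ : ∃ j, k = j + 1 := ⟨k - 1, by omega⟩
    simp only [Nat.add_sub_cancel]
    rw [hsq, sub_self]
    exact .zero

lemma qimObj_ratioPow (hρ : ρ.PosSemidef) (hσ : σ.PosDef) (hρσ : Commute ρ σ) (hk : 1 ≤ k) :
    QimObj k ρ σ (fun i => ratioPow ρ σ (alphaIM k) (i - 1)) (ratioPow ρ σ (alphaIM k) k) =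
      (mixedPow ρ σ (alphaIM k) (1 - alphaIM k)).trace.re := by
  have hα := one_le_alphaIM k
  have hαk := two_pow_mul_alphaIM_sub_one hk
  have hρA : ρ * ratioPow ρ σ (alphaIM k) 0 = mixedPow ρ σ (alphaIM k) (1 - alphaIM k) := by
    rw [← chainWeight_mul_ratioPow hρ hσ hρσ hα hαk (Nat.zero_le k), chainWeight_zero hρ.1 hσ.1]
  have hσA : σ * ratioPow ρ σ (alphaIM k) k = mixedPow ρ σ (alphaIM k) (1 - alphaIM k) := by
    rw [← chainWeight_mul_ratioPow hρ hσ hρσ hα hαk le_rfl, chainWeight_top hρ.1 hσ.1 hαk]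
  rw [qimObj_eq hρ.1]
  simp only [Nat.sub_self, hρA, hσA]
  ring

end IteratedMeanDivergence

theorem stmt_10_general (d k : ℕ) (hk : 1 ≤ k) (ρ σ : Matrix (Fin d) (Fin d) ℂ)
    (hρ : ρ.PosSemidef) (hσ : σ.PosDef)
    (hcomm : ρ * σ = σ * ρ) :
    Qim k ρ σ = (mrpow ρ (alphaIM k) * mrpow σ (1 - alphaIM k)).trace.re ∧
    Dim k ρ σ = (1 / (alphaIM k - 1)) *
      Real.log ((mrpow ρ (alphaIM k) * mrpow σ (1 - alphaIM k)).trace.re) := by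
  have hQ : Qim k ρ σ = (mixedPow ρ σ (alphaIM k) (1 - alphaIM k)).trace.re := by
    refine IsGreatest.csSup_eq ⟨⟨_, _, qimFeasible_ratioPow hρ hσ hcomm (one_le_alphaIM k) hk,
      (qimObj_ratioPow hρ hσ hcomm hk).symm⟩, ?_⟩
    rintro q ⟨V, Z, hVZ, rfl⟩
    rw [qimObj_eq hρ.1]
    exact hVZ.mul_re_trace_sub_mul_re_trace_le hρ hσ hcomm (one_le_alphaIM k)
      (two_pow_mul_alphaIM_sub_one hk)
  exact ⟨hQ, by rw [Dim, hQ, mixedPow]⟩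

/-- for commuting `ρ` and `σ`, the iterated mean divergence reduces to the
classical Rényi divergence. -/
theorem stmt_10 (d k : ℕ) (hk : 1 ≤ k) (ρ σ : Matrix (Fin d) (Fin d) ℂ)
    (hρ : ρ.PosSemidef) (hρtr : ρ.trace = 1) (hσ : σ.PosDef)
    (hcomm : ρ * σ = σ * ρ) :
    Qim k ρ σ = (mrpow ρ (alphaIM k) * mrpow σ (1 - alphaIM k)).trace.re ∧
    Dim k ρ σ = (1 / (alphaIM k - 1)) *
      Real.log ((mrpow ρ (alphaIM k) * mrpow σ (1 - alphaIM k)).trace.re) :=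
  stmt_10_general d k hk ρ σ hρ hσ hcomm
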